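/- The reversal invariance of the numerator fraction: for a finite sequence of positive integers (a₁, …, aₙ) with continued fraction value p/q in lowest terms, the reversed sequence (aₙ, …, a₁) has continued fraction value p/q′ where q·q′ ≡ (-1)^(n+1) mod p; in particular the two values have the same numerator p. -/

import Mathlib

/-- Continued fraction value of a finite sequence of rationals:
`cf [a] = a` and `cf (a :: rest) = a + 1/cf rest`. -/
def cf : List ℚ → ℚ
  | [] => 0
  | [a] => a
  | a :: b :: rest => a + 1 / cf (b :: rest)

/-!
The value of `[a₁, …, aₙ]` is `p / q`, where `(p, q)` is the first column of
`M = ∏ᵢ !![aᵢ, 1; 1, 0]`. Since `det M = (-1)ⁿ`, this fraction is already in lowest terms.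
Each factor is symmetric, so reversing the list transposes `M`: the reversed value is `p / q'`
with `q'` the other off-diagonal entry, and `det M = p * M₁₁ - q' * q` gives
`q * q' ≡ (-1)ⁿ⁺¹ (mod p)`.
-/

open Matrix

section CommSemiring

variable {R : Type*} [CommSemiring R]

def cfMatrix (l : List R) : Matrix (Fin 2) (Fin 2) R :=
  (l.map fun a => !![a, 1; 1, 0]).prod

@[simp]
theorem cfMatrix_cons (a : R) (l : List R) :
    cfMatrix (a :: l) = !![a, 1; 1, 0] * cfMatrix l := by
  simp [cfMatrix]

theorem cfMatrix_cons_zero_zero (a : R) (l : List R) :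
    cfMatrix (a :: l) 0 0 = a * cfMatrix l 0 0 + cfMatrix l 1 0 := by
  simp [Matrix.mul_apply, Fin.sum_univ_two]

theorem cfMatrix_cons_one_zero (a : R) (l : List R) :
    cfMatrix (a :: l) 1 0 = cfMatrix l 0 0 := by
  simp [Matrix.mul_apply, Fin.sum_univ_two]

theorem cfMatrix_reverse (l : List R) : cfMatrix l.reverse = (cfMatrix l)ᵀ := by
  have hsymm : ∀ a : R, (!![a, 1; 1, 0] : Matrix (Fin 2) (Fin 2) R)ᵀ = !![a, 1; 1, 0] := by
    intro a
    ext i j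
    fin_cases i <;> fin_cases j <;> rfl
  simp only [cfMatrix, transpose_list_prod, List.map_map, Function.comp_def, hsymm,
    List.map_reverse]

end CommSemiring

theorem det_cfMatrix {R : Type*} [CommRing R] (l : List R) :
    (cfMatrix l).det = (-1) ^ l.length := by
  induction l with
  | nil => simp [cfMatrix]
  | cons a l ih =>
    rw [cfMatrix_cons, det_mul, ih, det_fin_two_of, List.length_cons, pow_succ]
    ring

theorem Matrix.isCoprime_zero_zero_one_zero {R : Type*} [CommRing R]
    {A : Matrix (Fin 2) (Fin 2) R} (h : IsUnit A.det) : IsCoprime (A 0 0) (A 1 0) := by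
  obtain ⟨u, hu⟩ := h
  rw [det_fin_two] at hu
  exact ⟨↑u⁻¹ * A 1 1, -(↑u⁻¹ * A 0 1),
    by linear_combination (↑u⁻¹ : R) * hu.symm + u.inv_mul⟩

theorem cfMatrix_pos {l : List ℤ} (hl : l ≠ []) (hpos : ∀ a ∈ l, 0 < a) :
    0 < cfMatrix l 0 0 ∧ 0 < cfMatrix l 1 0 := by
  induction l with
  | nil => exact absurd rfl hl
  | cons a l ih =>
    have ha : 0 < a := hpos a List.mem_cons_self
    rcases eq_or_ne l [] with rfl | hl'
    · simp [cfMatrix, ha]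
    · obtain ⟨h₀, h₁⟩ := ih hl' fun b hb => hpos b (List.mem_cons_of_mem a hb)
      simp only [cfMatrix_cons_zero_zero, cfMatrix_cons_one_zero]
      exact ⟨by positivity, h₀⟩

theorem cf_map_intCast {l : List ℤ} (hl : l ≠ []) (hpos : ∀ a ∈ l, 0 < a) :
    cf (l.map (↑)) = ((cfMatrix l 0 0 : ℤ) : ℚ) / (cfMatrix l 1 0 : ℤ) := by
  induction l with
  | nil => exact absurd rfl hl
  | cons a l ih =>
    rcases l with _ | ⟨b, l⟩
    · simp [cf, cfMatrix]
    · have hpos' : ∀ x ∈ b :: l, 0 < x := fun x hx => hpos x (List.mem_cons_of_mem a hx)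
      obtain ⟨h₀, h₁⟩ := cfMatrix_pos (List.cons_ne_nil b l) hpos'
      have h₀' : ((cfMatrix (b :: l) 0 0 : ℤ) : ℚ) ≠ 0 := mod_cast h₀.ne'
      have h₁' : ((cfMatrix (b :: l) 1 0 : ℤ) : ℚ) ≠ 0 := mod_cast h₁.ne'
      rw [cfMatrix_cons_zero_zero a (b :: l), cfMatrix_cons_one_zero a (b :: l), List.map_cons,
        List.map_cons, cf, ← List.map_cons, ih (List.cons_ne_nil b l) hpos']
      push_cast
      field_simp

theorem Rat.num_den_div_of_isCoprime {p q : ℤ} (hq : 0 < q) (h : IsCoprime p q) :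
    ((p : ℚ) / q).num = p ∧ (((p : ℚ) / q).den : ℤ) = q :=
  have h' : Nat.Coprime p.natAbs q.natAbs := Int.isCoprime_iff_gcd_eq_one.mp h
  ⟨Rat.num_div_eq_of_coprime hq h', Rat.den_div_eq_of_coprime hq h'⟩

theorem num_den_cf_map_intCast {l : List ℤ} (hl : l ≠ []) (hpos : ∀ a ∈ l, 0 < a) :
    (cf (l.map (↑))).num = cfMatrix l 0 0 ∧
      ((cf (l.map (↑))).den : ℤ) = cfMatrix l 1 0 := by
  rw [cf_map_intCast hl hpos]
  refine Rat.num_den_div_of_isCoprime (cfMatrix_pos hl hpos).2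
    (isCoprime_zero_zero_one_zero ?_)
  rw [det_cfMatrix]
  exact (isUnit_neg_one (α := ℤ)).pow _

/-- Reversal invariance of the numerator: if a nonempty list of positive
integers has continued fraction value `p/q` in lowest terms, then the reversed
list has value `p/q′` with the same numerator `p`, and
`q·q′ ≡ (-1)^(n+1) (mod p)`. -/
theorem cf_reverse_numerator (l : List ℤ) (hl : l ≠ [])
    (hpos : ∀ a ∈ l, 0 < a) :
    (cf (l.map (fun a => (a : ℚ)))).num = (cf (l.reverse.map (fun a => (a : ℚ)))).num ∧
    Int.ModEq (cf (l.map (fun a => (a : ℚ)))).num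
      (((cf (l.map (fun a => (a : ℚ)))).den : ℤ) *
        ((cf (l.reverse.map (fun a => (a : ℚ)))).den : ℤ))
      ((-1 : ℤ) ^ (l.length + 1)) := by
  -- `l.map fun a => (a : ℚ)` elaborates through the list monad,
  -- as `(l >>= fun a => pure ↑a).map id`.
  have hcast : ∀ l : List ℤ, (l.map fun a => (a : ℚ)) = l.map Int.cast := fun l => by
    simp only [bind_pure_comp, List.map_id', List.map_eq_map]
  simp only [hcast]
  obtain ⟨hnum, hden⟩ := num_den_cf_map_intCast hl hpos
  obtain ⟨hnumRev, hdenRev⟩ :=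
    num_den_cf_map_intCast (List.reverse_ne_nil_iff.mpr hl) fun a ha =>
      hpos a (List.mem_reverse.mp ha)
  simp only [cfMatrix_reverse, transpose_apply] at hnumRev hdenRev
  have hdet := det_cfMatrix l
  rw [det_fin_two] at hdet
  refine ⟨hnum.trans hnumRev.symm, ?_⟩
  rw [hnum, hden, hdenRev]
  exact Int.modEq_iff_dvd.mpr ⟨-cfMatrix l 1 1, by rw [pow_succ]; linear_combination hdet⟩
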